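/- Let c ∈ O, let t > 0, and let f : O → ℝ be defined by f(x) = |x−c|^t. Then V_Beer(f) = |α−c|^t + |β−c|^t, where α = s_0/(1−π) and β = s_{q−1}/(1−π). In particular 1 ≤ V_Beer(f) ≤ 2, with V_Beer(f) = 1 if and only if c = α or c = β. -/

import Mathlib

/-
The Beer points of level `λ` satisfy `|m_i - m_j| = q^(-k)` with `k` the length of the common
prefix of the digit strings of `i` and `j`. So if `c ∈ E_j`, the distance `|x_i - c|` of any
admissible `x_i ∈ E_i` decreases in `i` up to `j` and increases afterwards, and the sum defining
`V_λ` telescopes to `f(x_0) + f(x_{q^λ-1}) - 2 f(x_j)`. Since `α = s_0 (1 + π + π² + ⋯)` lies in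
`E_0` and `β` in `E_{q^λ-1}`, this is at most `|α - c|^t + |β - c|^t`, with equality for `x_j = c`
and `x_i = m_i` otherwise, as soon as `λ` is so large that `c ∉ E_0` unless `c = α`, and
`c ∉ E_{q^λ-1}` unless `c = β`. Finally `|α - β| = 1` while `|α - c|, |β - c| ≤ 1`, so one of the
two distances is `1`.
-/

open MeasureTheory Set Filter Topology
open scoped ENNReal NNReal

noncomputable section

namespace NAKoksma

variable (K : Type*) [NontriviallyNormedField K] [IsUltrametricDist K]

/-- The ring of integers `O = {x : K | ‖x‖ ≤ 1}` of a non-Archimedean normed field. -/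
def RoI : Subring K where
  carrier := {x : K | ‖x‖ ≤ 1}
  mul_mem' := fun {a b} ha hb => by
    simp only [Set.mem_setOf_eq] at *
    calc ‖a * b‖ = ‖a‖ * ‖b‖ := norm_mul a b
      _ ≤ 1 * 1 := mul_le_mul ha hb (norm_nonneg b) zero_le_one
      _ = 1 := one_mul 1
  one_mem' := by simp
  add_mem' := fun {a b} ha hb => by
    simp only [Set.mem_setOf_eq] at *
    exact (IsUltrametricDist.norm_add_le_max a b).trans (max_le ha hb)
  zero_mem' := by simp
  neg_mem' := fun {a} ha => by
    simp only [Set.mem_setOf_eq, norm_neg] at *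
    exact ha

variable (q : ℕ)

/-- The disc of radius `q ^ (-n)` centered at `a` in the ring of integers. -/
def disc (a : RoI K) (n : ℕ) : Set (RoI K) :=
  {x : RoI K | ‖(x : K) - (a : K)‖ ≤ (q : ℝ) ^ (-(n : ℤ))}

/-- A subset of `O` is a disc if it is of the form `D_r(a)` with `r = q^(-n)`, `0 < r ≤ 1`. -/
def IsDisc (D : Set (RoI K)) : Prop := ∃ (a : RoI K) (n : ℕ), D = disc K q a n

/-- A Taibleson partition: a finite collection of discs partitioning `O`. -/
def IsTaibPartition (P : Finset (Set (RoI K))) : Prop :=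
  (∀ D ∈ P, IsDisc K q D) ∧ (P : Set (Set (RoI K))).PairwiseDisjoint id ∧
    ⋃₀ (P : Set (Set (RoI K))) = Set.univ

/-- `V_Π(f) = Σ_{D ∈ Π} sup_{x,y ∈ D} (f x - f y)`, valued in `[0,∞]`. -/
def VPi (f : RoI K → ℝ) (P : Finset (Set (RoI K))) : ℝ≥0∞ :=
  ∑ D ∈ P, ⨆ x ∈ D, ⨆ y ∈ D, ENNReal.ofReal (f x - f y)

/-- The Taibleson variation `V_Taib(f) = sup_Π V_Π(f)`. -/
def VTaib (f : RoI K → ℝ) : ℝ≥0∞ :=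
  ⨆ P : {P : Finset (Set (RoI K)) // IsTaibPartition K q P}, VPi K f P.1

variable [MeasurableSpace K]

/-- The discrepancy `Δ(X) = sup_D | |X ∩ D| / |X| - μ(D) |` of a finite set `X ⊆ O`. -/
def discrepancy (μ : Measure (RoI K)) (X : Finset (RoI K)) : ℝ :=
  ⨆ D : {D : Set (RoI K) // IsDisc K q D},
    |(Nat.card ↥((X : Set (RoI K)) ∩ D.1) : ℝ) / (X.card : ℝ) - (μ D.1).toReal|

variable (π : RoI K)

/-- The `i`-th point `m_i = a_0 + a_1 π + ⋯ + a_{λ-1} π^{λ-1}` in the dictionary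
ordering of the coefficient strings `(a_0, …, a_{λ-1})` with respect to the
indexing of the coset representatives `S`. -/
def beerPoint (S : ℕ → RoI K) (lam i : ℕ) : RoI K :=
  ∑ j ∈ Finset.range lam, S (i / q ^ (lam - 1 - j) % q) * π ^ j

/-- `V_λ(f) = sup_{x_i ∈ E_i} Σ_{i=1}^{q^λ - 1} |f(x_i) - f(x_{i-1})|` over the ordered Beer
partition `E_0, …, E_{q^λ - 1}` of level `λ`. -/
def VBeerLevel (S : ℕ → RoI K) (f : RoI K → ℝ) (lam : ℕ) : ℝ≥0∞ :=
  ⨆ x : {x : ℕ → RoI K // ∀ i < q ^ lam, x i ∈ disc K q (beerPoint K q π S lam i) lam},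
    ∑ i ∈ Finset.Ico 1 (q ^ lam), ENNReal.ofReal |f (x.1 i) - f (x.1 (i - 1))|

/-- The Beer variation `V_Beer(f) = lim_{λ→∞} V_λ(f) = sup_{λ ≥ 1} V_λ(f)`. -/
def VBeer (S : ℕ → RoI K) (f : RoI K → ℝ) : ℝ≥0∞ :=
  ⨆ lam : ℕ, VBeerLevel K q π S f (lam + 1)

/-- `S : ℕ → O` (through indices `0, …, q-1`) is a complete ordered system of coset
representatives for the residue field `O/πO`, containing `0`. -/
def IsRepSystem (S : ℕ → RoI K) : Prop :=
  (∃ i, i < q ∧ S i = 0) ∧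
    Function.Bijective fun i : Fin q => Ideal.Quotient.mk (Ideal.span {π}) (S (i : ℕ))

/-- The Berkovich-analytic variation
`V_Berk(f) = Σ_D Σ_{D' ≺ D} |f(D') - f(D)|`, where `D' ≺ D` means `D' ⊆ D` and
`μ(D') = μ(D)/q`, and `f(D)` denotes the average of `f` over `D`. -/
def VBerk (μ : Measure (RoI K)) (f : RoI K → ℝ) : ℝ≥0∞ :=
  ∑' D : {D : Set (RoI K) // IsDisc K q D},
    ∑' D' : {D' : Set (RoI K) // IsDisc K q D' ∧ D' ⊆ D.1 ∧ μ D' = μ D.1 / (q : ℝ≥0∞)},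
      ENNReal.ofReal |(⨍ x in D'.1, f x ∂μ) - ⨍ x in D.1, f x ∂μ|

/-- The level `ℓ(γ)` of a character `γ : O → 𝕋`: the least `ℓ ≥ 0` such that `γ` is trivial
on `π^ℓ O`. -/
def charLevel (γ : AddChar (RoI K) Circle) : ℕ :=
  sInf {l : ℕ | ∀ y : RoI K, γ (π ^ l * y) = 1}

/-- The Fourier coefficient `f̂(γ) = ∫_O f(x) conj(γ(x)) dμ(x)`. -/
def fourierCoeff (μ : Measure (RoI K)) (f : RoI K → ℂ) (γ : AddChar (RoI K) Circle) : ℂ :=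
  ∫ x, f x * (starRingEnd ℂ) ((γ x : Circle) : ℂ) ∂μ

/-- The Fourier-analytic variation `V_Fourier(f) = Σ_{γ ≠ γ₀} q^{ℓ(γ)} |f̂(γ)|`, the sum over
all nontrivial continuous characters of `O`. -/
def VFourier (μ : Measure (RoI K)) (f : RoI K → ℝ) : ℝ≥0∞ :=
  ∑' γ : {γ : AddChar (RoI K) Circle // Continuous ⇑γ ∧ γ ≠ 1},
    ENNReal.ofReal ((q : ℝ) ^ charLevel K π γ.1 * ‖fourierCoeff K μ (fun x => (f x : ℂ)) γ.1‖)

/-- A function is a finite linear combination of characteristic functions of discs. -/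
def IsDiscSimple (g : RoI K → ℝ) : Prop :=
  ∃ (P : Finset (Set (RoI K))) (c : Set (RoI K) → ℝ),
    (∀ D ∈ P, IsDisc K q D) ∧ g = fun x => ∑ D ∈ P, c D * D.indicator 1 x

/-- Integrability in the sense of Beer: `f` can be squeezed between finite linear combinations
of characteristic functions of discs with integrals converging to each other. -/
def BeerIntegrable [MeasurableSpace K] (μ : Measure (RoI K)) (f : RoI K → ℝ) : Prop :=
  ∃ u v : ℕ → RoI K → ℝ,
    (∀ n, IsDiscSimple K q (u n)) ∧ (∀ n, IsDiscSimple K q (v n)) ∧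
    (∀ n x, u n x ≤ f x ∧ f x ≤ v n x) ∧
    Tendsto (fun n => ∫ x, (v n x - u n x) ∂μ) atTop (𝓝 0)

variable [LocallyCompactSpace K] [BorelSpace K]

theorem sum_range_abs_sub_of_antitoneOn_of_monotoneOn {w : ℕ → ℝ} {j n : ℕ} (hjn : j ≤ n)
    (hanti : AntitoneOn w (Set.Iic j)) (hmono : MonotoneOn w (Set.Icc j n)) :
    ∑ i ∈ Finset.range n, |w (i + 1) - w i| = (w 0 - w j) + (w n - w j) := by
  rw [← Finset.sum_range_add_sum_Ico _ hjn, ← Finset.sum_range_sub' w,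
    ← Finset.sum_Ico_sub (f := w) hjn]
  congr 1
  · refine Finset.sum_congr rfl fun i hi => ?_
    have hi : i + 1 ≤ j := Finset.mem_range.mp hi
    rw [abs_sub_comm, abs_of_nonneg (sub_nonneg.mpr <|
      hanti (Set.mem_Iic.mpr (by omega)) (Set.mem_Iic.mpr hi) (Nat.le_succ i))]
  · refine Finset.sum_congr rfl fun i hi => ?_
    obtain ⟨hji, hin⟩ := Finset.mem_Ico.mp hi
    exact abs_of_nonneg (sub_nonneg.mpr <|
      hmono ⟨hji, hin.le⟩ ⟨by omega, hin⟩ (Nat.le_succ i))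

theorem norm_sum_eq_of_forall_norm_lt {ι E : Type*} [SeminormedAddCommGroup E]
    [IsUltrametricDist E] {s : Finset ι} {f : ι → E} {k : ι} (hk : k ∈ s)
    (h : ∀ i ∈ s, i ≠ k → ‖f i‖ < ‖f k‖) : ‖∑ i ∈ s, f i‖ = ‖f k‖ := by
  classical
  rw [← Finset.add_sum_erase s f hk]
  rcases (s.erase k).eq_empty_or_nonempty with he | hne
  · rw [he, Finset.sum_empty, add_zero]
  obtain ⟨i, hi, hle⟩ := IsUltrametricDist.exists_norm_finsetSum_le_of_nonempty hne f
  obtain ⟨hik, hi⟩ := Finset.mem_erase.mp hi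
  have hlt := hle.trans_lt (h i hi hik)
  rw [IsUltrametricDist.norm_add_eq_max_of_norm_ne_norm hlt.ne', max_eq_left hlt.le]

theorem norm_sub_le_max {E : Type*} [SeminormedAddCommGroup E] [IsUltrametricDist E] (x y : E) :
    ‖x - y‖ ≤ max ‖x‖ ‖y‖ := by
  simpa only [sub_eq_add_neg, norm_neg] using IsUltrametricDist.norm_add_le_max x (-y)

theorem norm_sub_le_of_norm_sub_le {E : Type*} [SeminormedAddCommGroup E] [IsUltrametricDist E]
    {u v a : E} {r : ℝ} (hu : ‖u - a‖ ≤ r) (hv : ‖v - a‖ ≤ r) : ‖u - v‖ ≤ r := by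
  simpa using (norm_sub_le_max (u - a) (v - a)).trans (max_le hu hv)

theorem norm_sub_eq_of_norm_sub_le {E : Type*} [SeminormedAddCommGroup E] [IsUltrametricDist E]
    {u v a b : E} {r : ℝ} (hu : ‖u - a‖ ≤ r) (hv : ‖v - b‖ ≤ r) (hr : r < ‖a - b‖) :
    ‖u - v‖ = ‖a - b‖ := by
  have hsmall : ‖(u - a) - (v - b)‖ < ‖a - b‖ :=
    (norm_sub_le_max _ _).trans_lt (max_lt (hu.trans_lt hr) (hv.trans_lt hr))
  have e : u - v = (a - b) + ((u - a) - (v - b)) := by abel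
  rw [e, IsUltrametricDist.norm_add_eq_max_of_norm_ne_norm hsmall.ne', max_eq_left hsmall.le]

-- `i / q ^ (lam - 1 - r) % q` is the `r`-th digit of `i` written with `lam` base-`q` digits, most
-- significant first, and `i / q ^ (lam - k)` encodes its first `k` digits.
theorem digit_eq_of_div_eq {q lam k r i j : ℕ} (hk : k ≤ lam) (hr : r < k)
    (h : i / q ^ (lam - k) = j / q ^ (lam - k)) :
    i / q ^ (lam - 1 - r) % q = j / q ^ (lam - 1 - r) % q := by
  have e : lam - 1 - r = (lam - k) + (k - 1 - r) := by omega
  rw [e, pow_add, ← Nat.div_div_eq_div_mul, ← Nat.div_div_eq_div_mul, h]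

theorem div_pow_succ_eq_of_digit_eq {q lam k i j : ℕ} (hk : k < lam)
    (h : i / q ^ (lam - k) = j / q ^ (lam - k))
    (hd : i / q ^ (lam - 1 - k) % q = j / q ^ (lam - 1 - k) % q) :
    i / q ^ (lam - (k + 1)) = j / q ^ (lam - (k + 1)) := by
  have e : lam - k = (lam - 1 - k) + 1 := by omega
  rw [e, pow_succ, ← Nat.div_div_eq_div_mul, ← Nat.div_div_eq_div_mul] at h
  rw [show lam - (k + 1) = lam - 1 - k by omega, ← Nat.div_add_mod (i / _) q,
    ← Nat.div_add_mod (j / _) q, h, hd]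

theorem div_pow_sub_eq_of_mem_uIcc {q lam k i j a : ℕ} (ha : a ∈ Set.uIcc i j)
    (h : i / q ^ (lam - k) = j / q ^ (lam - k)) :
    a / q ^ (lam - k) = j / q ^ (lam - k) := by
  rcases Set.mem_uIcc.mp ha with ⟨h1, h2⟩ | ⟨h1, h2⟩
  · have := Nat.div_le_div_right (c := q ^ (lam - k)) h1
    have := Nat.div_le_div_right (c := q ^ (lam - k)) h2
    omega
  · have := Nat.div_le_div_right (c := q ^ (lam - k)) h1
    have := Nat.div_le_div_right (c := q ^ (lam - k)) h2
    omega

theorem pow_sub_one_div_pow_mod {q lam m : ℕ} (hq : 0 < q) (hm : m < lam) :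
    (q ^ lam - 1) / q ^ m % q = q - 1 := by
  obtain ⟨s, rfl⟩ := Nat.exists_eq_add_of_lt hm
  have h1 : 1 ≤ q ^ m := Nat.one_le_pow _ _ hq
  have h2 : 1 ≤ q ^ s := Nat.one_le_pow _ _ hq
  have e : q ^ (m + s + 1) - 1 = (q ^ m - 1) + q ^ m * ((q - 1) + q * (q ^ s - 1)) := by
    zify [h1, h2, hq, Nat.one_le_pow (m + s + 1) q hq]
    ring
  rw [e, Nat.add_mul_div_left _ _ (by positivity), Nat.div_eq_of_lt (by omega), zero_add,
    Nat.add_mul_mod_self_left, Nat.mod_eq_of_lt (by omega)]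

theorem norm_one_sub_eq_one {R : Type*} [SeminormedRing R] [NormOneClass R] [IsUltrametricDist R]
    {x : R} (hx : ‖x‖ < 1) : ‖1 - x‖ = 1 := by
  have hne : ‖(1 : R)‖ ≠ ‖-x‖ := by rw [norm_one, norm_neg]; exact hx.ne'
  rw [sub_eq_add_neg, IsUltrametricDist.norm_add_eq_max_of_norm_ne_norm hne, norm_one, norm_neg,
    max_eq_left hx.le]

theorem eventually_eq_of_norm_sub_le_pow {E : Type*} [NormedAddCommGroup E] {ρ : ℝ}
    (hρ0 : 0 ≤ ρ) (hρ1 : ρ < 1) (u v : E) : ∀ᶠ n in atTop, ‖u - v‖ ≤ ρ ^ n → u = v := by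
  rcases eq_or_ne u v with rfl | hne
  · exact Eventually.of_forall fun _ _ => rfl
  filter_upwards [(tendsto_pow_atTop_nhds_zero_of_lt_one hρ0 hρ1).eventually
    (gt_mem_nhds (norm_pos_iff.mpr (sub_ne_zero.mpr hne)))] with n hn hle
  exact absurd hle (not_le.mpr hn)

theorem rpow_add_rpow_bounds {a b t : ℝ} (ha : 0 ≤ a) (hb : 0 ≤ b) (ha1 : a ≤ 1) (hb1 : b ≤ 1)
    (hab : a = 1 ∨ b = 1) (ht : 0 < t) :
    1 ≤ a ^ t + b ^ t ∧ a ^ t + b ^ t ≤ 2 ∧ (a ^ t + b ^ t = 1 ↔ a = 0 ∨ b = 0) := by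
  have key {b : ℝ} (hb : 0 ≤ b) (hb1 : b ≤ 1) :
      1 ≤ 1 ^ t + b ^ t ∧ 1 ^ t + b ^ t ≤ 2 ∧ (1 ^ t + b ^ t = 1 ↔ (1 : ℝ) = 0 ∨ b = 0) := by
    rw [Real.one_rpow]
    refine ⟨by linarith [Real.rpow_nonneg hb t], by linarith [Real.rpow_le_one hb hb1 ht.le], ?_⟩
    simp [Real.rpow_eq_zero hb ht.ne']
  rcases hab with rfl | rfl
  · exact key hb hb1
  · simpa only [add_comm, or_comm] using key ha ha1

section BeerPoints

variable {K : Type*} [NontriviallyNormedField K] [IsUltrametricDist K] {q : ℕ} {π : RoI K}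
  {S : ℕ → RoI K}

structure IsDigitSystem (q : ℕ) (π : RoI K) (S : ℕ → RoI K) : Prop where
  one_lt : 1 < q
  norm_pi : ‖(π : K)‖ = (q : ℝ)⁻¹
  norm_le_norm_pi : ∀ x : RoI K, ‖(x : K)‖ < 1 → ‖(x : K)‖ ≤ ‖(π : K)‖
  isRepSystem : IsRepSystem K q π S

theorem norm_coe_sub_le_one (x y : RoI K) : ‖(x : K) - y‖ ≤ 1 :=
  (norm_sub_le_max _ _).trans (max_le x.2 y.2)

theorem IsDigitSystem.norm_pi_pos (h : IsDigitSystem q π S) : 0 < ‖(π : K)‖ := by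
  rw [h.norm_pi]
  exact inv_pos.mpr (Nat.cast_pos.mpr (by linarith [h.one_lt]))

theorem IsDigitSystem.norm_pi_lt_one (h : IsDigitSystem q π S) : ‖(π : K)‖ < 1 := by
  rw [h.norm_pi]
  exact inv_lt_one_of_one_lt₀ (Nat.one_lt_cast.mpr h.one_lt)

theorem IsDigitSystem.mem_disc_iff (h : IsDigitSystem q π S) {a x : RoI K} {lam : ℕ} :
    x ∈ disc K q a lam ↔ ‖(x : K) - a‖ ≤ ‖(π : K)‖ ^ lam := by
  rw [disc, Set.mem_ofPred_eq, h.norm_pi, zpow_neg, zpow_natCast, inv_pow]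

theorem IsDigitSystem.norm_sub_eq_one (h : IsDigitSystem q π S) {a b : ℕ} (ha : a < q)
    (hb : b < q) (hab : a ≠ b) : ‖(S a : K) - S b‖ = 1 := by
  refine (norm_coe_sub_le_one _ _).antisymm (not_lt.mp fun hlt => hab ?_)
  have hle : ‖((S a - S b : RoI K) : K)‖ ≤ ‖(π : K)‖ := h.norm_le_norm_pi _ (by simpa using hlt)
  have hπ0 : (π : K) ≠ 0 := norm_pos_iff.mp h.norm_pi_pos
  let y : RoI K := ⟨((S a : K) - S b) / π, show ‖_‖ ≤ 1 by
    rw [norm_div, div_le_one h.norm_pi_pos]; simpa using hle⟩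
  have hmem : S a - S b ∈ Ideal.span {π} :=
    Ideal.mem_span_singleton'.mpr ⟨y, Subtype.ext (by simp [y, div_mul_cancel₀ _ hπ0])⟩
  simpa using h.isRepSystem.2.1 (a₁ := ⟨a, ha⟩) (a₂ := ⟨b, hb⟩) (Ideal.Quotient.eq.mpr hmem)

theorem coe_beerPoint_sub_coe_beerPoint (lam i j : ℕ) :
    (beerPoint K q π S lam i : K) - beerPoint K q π S lam j =
      ∑ r ∈ Finset.range lam,
        ((S (i / q ^ (lam - 1 - r) % q) : K) - S (j / q ^ (lam - 1 - r) % q)) * (π : K) ^ r := by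
  simp only [beerPoint, sub_mul]
  push_cast
  rw [Finset.sum_sub_distrib]

theorem norm_beerPoint_sub_le {lam i j k : ℕ} (hk : k ≤ lam)
    (h : i / q ^ (lam - k) = j / q ^ (lam - k)) :
    ‖(beerPoint K q π S lam i : K) - beerPoint K q π S lam j‖ ≤ ‖(π : K)‖ ^ k := by
  rw [coe_beerPoint_sub_coe_beerPoint]
  refine IsUltrametricDist.norm_sum_le_of_forall_le_of_nonneg (by positivity) fun r _ => ?_
  rcases lt_or_ge r k with hr | hr
  · simp [digit_eq_of_div_eq hk hr h]
  · rw [norm_mul, norm_pow]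
    calc _ ≤ 1 * ‖(π : K)‖ ^ r := by gcongr; exact norm_coe_sub_le_one _ _
      _ ≤ ‖(π : K)‖ ^ k := by rw [one_mul]; exact pow_le_pow_of_le_one (norm_nonneg _) π.2 hr

theorem IsDigitSystem.norm_beerPoint_sub_eq (h : IsDigitSystem q π S) {lam i j k : ℕ}
    (hk : k < lam) (hpre : i / q ^ (lam - k) = j / q ^ (lam - k))
    (hd : i / q ^ (lam - 1 - k) % q ≠ j / q ^ (lam - 1 - k) % q) :
    ‖(beerPoint K q π S lam i : K) - beerPoint K q π S lam j‖ = ‖(π : K)‖ ^ k := by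
  have hq : 0 < q := zero_lt_one.trans h.one_lt
  have hlead : ‖((S (i / q ^ (lam - 1 - k) % q) : K) - S (j / q ^ (lam - 1 - k) % q)) *
      (π : K) ^ k‖ = ‖(π : K)‖ ^ k := by
    rw [norm_mul, h.norm_sub_eq_one (Nat.mod_lt _ hq) (Nat.mod_lt _ hq) hd, one_mul, norm_pow]
  rw [coe_beerPoint_sub_coe_beerPoint, norm_sum_eq_of_forall_norm_lt (Finset.mem_range.mpr hk),
    hlead]
  intro r _ hrk
  rw [hlead]
  rcases lt_or_gt_of_ne hrk with hr | hr
  · simpa [digit_eq_of_div_eq hk.le hr hpre] using pow_pos h.norm_pi_pos k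
  · rw [norm_mul, norm_pow]
    calc _ ≤ 1 * ‖(π : K)‖ ^ r := by gcongr; exact norm_coe_sub_le_one _ _
      _ < ‖(π : K)‖ ^ k := by
        rw [one_mul]; exact pow_lt_pow_right_of_lt_one₀ h.norm_pi_pos h.norm_pi_lt_one hr

theorem IsDigitSystem.exists_norm_beerPoint_sub_eq (h : IsDigitSystem q π S) {lam i j : ℕ}
    (hi : i < q ^ lam) (hj : j < q ^ lam) (hne : i ≠ j) :
    ∃ k < lam, i / q ^ (lam - k) = j / q ^ (lam - k) ∧
      ‖(beerPoint K q π S lam i : K) - beerPoint K q π S lam j‖ = ‖(π : K)‖ ^ k := by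
  classical
  let P k := i / q ^ (lam - k) = j / q ^ (lam - k)
  have hP0 : P 0 := by simp only [P, Nat.sub_zero, Nat.div_eq_of_lt hi, Nat.div_eq_of_lt hj]
  have hPk : P (Nat.findGreatest P lam) := Nat.findGreatest_spec (Nat.zero_le lam) hP0
  have hk : Nat.findGreatest P lam < lam := (Nat.findGreatest_le lam).lt_of_ne fun hk => hne <| by
    simpa only [P, hk, Nat.sub_self, pow_zero, Nat.div_one] using hPk
  refine ⟨_, hk, hPk, h.norm_beerPoint_sub_eq hk hPk fun hd => ?_⟩
  exact Nat.findGreatest_is_greatest (Nat.lt_succ_self _) hk (div_pow_succ_eq_of_digit_eq hk hPk hd)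

theorem IsDigitSystem.norm_pi_pow_lt_norm_beerPoint_sub (h : IsDigitSystem q π S) {lam i j : ℕ}
    (hi : i < q ^ lam) (hj : j < q ^ lam) (hne : i ≠ j) :
    ‖(π : K)‖ ^ lam < ‖(beerPoint K q π S lam i : K) - beerPoint K q π S lam j‖ := by
  obtain ⟨k, hk, -, hnorm⟩ := h.exists_norm_beerPoint_sub_eq hi hj hne
  rw [hnorm]
  exact pow_lt_pow_right_of_lt_one₀ h.norm_pi_pos h.norm_pi_lt_one hk

theorem IsDigitSystem.norm_beerPoint_sub_le_of_mem_uIcc (h : IsDigitSystem q π S)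
    {lam i j a : ℕ} (hi : i < q ^ lam) (hj : j < q ^ lam) (ha : a ∈ Set.uIcc i j) :
    ‖(beerPoint K q π S lam a : K) - beerPoint K q π S lam j‖ ≤
      ‖(beerPoint K q π S lam i : K) - beerPoint K q π S lam j‖ := by
  rcases eq_or_ne i j with rfl | hne
  · rw [Set.uIcc_self, Set.mem_singleton_iff] at ha
    rw [ha]
  obtain ⟨k, hk, hpre, hnorm⟩ := h.exists_norm_beerPoint_sub_eq hi hj hne
  rw [hnorm]
  exact norm_beerPoint_sub_le hk.le (div_pow_sub_eq_of_mem_uIcc ha hpre)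

theorem beerPoint_succ {a : ℕ} (ha : a < q) (lam i : ℕ) :
    beerPoint K q π S (lam + 1) (q * i + a) = beerPoint K q π S lam i + S a * π ^ lam := by
  have hq : 0 < q := Nat.zero_lt_of_lt ha
  rw [beerPoint, Finset.sum_range_succ, beerPoint]
  congr 1
  · refine Finset.sum_congr rfl fun r hr => ?_
    rw [show lam + 1 - 1 - r = lam - 1 - r + 1 by have := Finset.mem_range.mp hr; omega,
      pow_succ', ← Nat.div_div_eq_div_mul, Nat.mul_add_div hq, Nat.div_eq_of_lt ha, add_zero]
  · simp [Nat.mod_eq_of_lt ha]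

theorem IsRepSystem.exists_beerPoint_add (hS : IsRepSystem K q π S) (c : RoI K) (lam : ℕ) :
    ∃ j < q ^ lam, ∃ z : RoI K, c = beerPoint K q π S lam j + π ^ lam * z := by
  induction lam with
  | zero => exact ⟨0, by simp, c, by simp [beerPoint]⟩
  | succ lam ih =>
    obtain ⟨j, hj, z, hz⟩ := ih
    obtain ⟨a, ha⟩ := hS.2.2 (Ideal.Quotient.mk _ z)
    obtain ⟨w, hw⟩ := Ideal.mem_span_singleton'.mp (Ideal.Quotient.eq.mp ha)
    refine ⟨q * j + a, ?_, -w, ?_⟩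
    · calc q * j + a < q * (j + 1) := by have := a.2; linarith
        _ ≤ q ^ (lam + 1) := by rw [pow_succ']; exact Nat.mul_le_mul_left _ hj
    · rw [beerPoint_succ a.2, hz]
      linear_combination π ^ lam * hw

theorem norm_div_one_sub_sub_beerPoint_le (hπ : ‖(π : K)‖ < 1) {lam i a : ℕ}
    (hd : ∀ r < lam, i / q ^ (lam - 1 - r) % q = a) :
    ‖(S a : K) / (1 - π) - beerPoint K q π S lam i‖ ≤ ‖(π : K)‖ ^ lam := by
  have hone : ‖1 - (π : K)‖ = 1 := norm_one_sub_eq_one hπ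
  have hne : 1 - (π : K) ≠ 0 := norm_ne_zero_iff.mp (by rw [hone]; exact one_ne_zero)
  have hm : (beerPoint K q π S lam i : K) = S a * ∑ r ∈ Finset.range lam, (π : K) ^ r := by
    simp only [beerPoint, Finset.mul_sum]
    push_cast
    exact Finset.sum_congr rfl fun r hr => by rw [hd r (Finset.mem_range.mp hr)]
  have e : (S a : K) / (1 - π) - beerPoint K q π S lam i = S a * π ^ lam / (1 - π) := by
    rw [hm, eq_div_iff hne, sub_mul, div_mul_cancel₀ _ hne]
    linear_combination (S a : K) * geom_sum_mul (π : K) lam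
  rw [e, norm_div, hone, div_one, norm_mul, norm_pow]
  exact mul_le_of_le_one_left (by positivity) (S a).2

theorem IsDigitSystem.norm_sub_eq_norm_sub_of_ne (h : IsDigitSystem q π S) {lam i j : ℕ}
    (hi : i < q ^ lam) (hj : j < q ^ lam) (hne : i ≠ j) {u v c : K}
    (hu : ‖u - beerPoint K q π S lam i‖ ≤ ‖(π : K)‖ ^ lam)
    (hv : ‖v - beerPoint K q π S lam i‖ ≤ ‖(π : K)‖ ^ lam)
    (hc : ‖c - beerPoint K q π S lam j‖ ≤ ‖(π : K)‖ ^ lam) : ‖u - c‖ = ‖v - c‖ := by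
  have hsep := h.norm_pi_pow_lt_norm_beerPoint_sub hi hj hne
  rw [norm_sub_eq_of_norm_sub_le hu hc hsep, norm_sub_eq_of_norm_sub_le hv hc hsep]

theorem IsDigitSystem.norm_sub_le_of_mem_uIcc (h : IsDigitSystem q π S) {lam i j a : ℕ}
    {x : ℕ → RoI K} {c : K}
    (hx : ∀ i < q ^ lam, ‖(x i : K) - beerPoint K q π S lam i‖ ≤ ‖(π : K)‖ ^ lam)
    (hc : ‖c - beerPoint K q π S lam j‖ ≤ ‖(π : K)‖ ^ lam)
    (hi : i < q ^ lam) (hj : j < q ^ lam) (ha : a ∈ Set.uIcc i j) :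
    ‖(x a : K) - c‖ ≤ ‖(x i : K) - c‖ := by
  have haq : a < q ^ lam := by rcases Set.mem_uIcc.mp ha with ⟨-, h2⟩ | ⟨-, h2⟩ <;> omega
  rcases eq_or_ne i j with rfl | hij
  · rw [Set.uIcc_self, Set.mem_singleton_iff] at ha
    rw [ha]
  have hsep := h.norm_pi_pow_lt_norm_beerPoint_sub hi hj hij
  rw [norm_sub_eq_of_norm_sub_le (hx i hi) hc hsep]
  rcases eq_or_ne a j with rfl | haj
  · exact (norm_sub_le_of_norm_sub_le (hx a haq) hc).trans hsep.le
  · rw [norm_sub_eq_of_norm_sub_le (hx a haq) hc (h.norm_pi_pow_lt_norm_beerPoint_sub haq hj haj)]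
    exact h.norm_beerPoint_sub_le_of_mem_uIcc hi hj ha

theorem IsDigitSystem.sum_abs_sub_rpow_eq (h : IsDigitSystem q π S) {lam j : ℕ}
    {x : ℕ → RoI K} {c : K}
    (hx : ∀ i < q ^ lam, ‖(x i : K) - beerPoint K q π S lam i‖ ≤ ‖(π : K)‖ ^ lam)
    (hc : ‖c - beerPoint K q π S lam j‖ ≤ ‖(π : K)‖ ^ lam) (hj : j < q ^ lam)
    {t : ℝ} (ht : 0 ≤ t) :
    ∑ i ∈ Finset.Ico 1 (q ^ lam), |‖(x i : K) - c‖ ^ t - ‖(x (i - 1) : K) - c‖ ^ t| =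
      (‖(x 0 : K) - c‖ ^ t - ‖(x j : K) - c‖ ^ t) +
        (‖(x (q ^ lam - 1) : K) - c‖ ^ t - ‖(x j : K) - c‖ ^ t) := by
  set w : ℕ → ℝ := fun i => ‖(x i : K) - c‖ ^ t
  have hw : ∀ {i a}, i < q ^ lam → a ∈ Set.uIcc i j → w a ≤ w i := fun hi ha =>
    Real.rpow_le_rpow (norm_nonneg _) (h.norm_sub_le_of_mem_uIcc hx hc hi hj ha) ht
  rw [Finset.sum_Ico_eq_sum_range]
  simp only [add_comm 1, Nat.add_sub_cancel]
  refine sum_range_abs_sub_of_antitoneOn_of_monotoneOn (w := w) (show j ≤ q ^ lam - 1 by omega)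
    (fun a ha b hb hab => ?_) (fun a ha b hb hab => ?_)
  · exact hw (lt_of_le_of_lt ha hj) (Set.mem_uIcc.mpr (Or.inl ⟨hab, hb⟩))
  · exact hw (by have := hb.2; omega) (Set.mem_uIcc.mpr (Or.inr ⟨ha.1, hab⟩))

theorem IsRepSystem.exists_norm_sub_beerPoint_le (hS : IsRepSystem K q π S) (c : RoI K)
    (lam : ℕ) : ∃ j < q ^ lam, ‖(c : K) - beerPoint K q π S lam j‖ ≤ ‖(π : K)‖ ^ lam := by
  obtain ⟨j, hj, z, rfl⟩ := hS.exists_beerPoint_add c lam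
  refine ⟨j, hj, ?_⟩
  push_cast
  rw [add_sub_cancel_left, norm_mul, norm_pow]
  exact mul_le_of_le_one_right (by positivity) z.2

theorem IsDigitSystem.norm_div_one_sub_sub_beerPoint_zero_le (h : IsDigitSystem q π S)
    (lam : ℕ) : ‖(S 0 : K) / (1 - π) - beerPoint K q π S lam 0‖ ≤ ‖(π : K)‖ ^ lam :=
  norm_div_one_sub_sub_beerPoint_le h.norm_pi_lt_one fun _ _ => by simp

theorem IsDigitSystem.norm_div_one_sub_sub_beerPoint_last_le (h : IsDigitSystem q π S)
    (lam : ℕ) :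
    ‖(S (q - 1) : K) / (1 - π) - beerPoint K q π S lam (q ^ lam - 1)‖ ≤ ‖(π : K)‖ ^ lam :=
  norm_div_one_sub_sub_beerPoint_le h.norm_pi_lt_one fun _ _ =>
    pow_sub_one_div_pow_mod (zero_lt_one.trans h.one_lt) (by omega)

theorem IsDigitSystem.rpow_sub_rpow_le (h : IsDigitSystem q π S) {lam i j : ℕ}
    (hi : i < q ^ lam) (hj : j < q ^ lam) {x : ℕ → RoI K} {v c : K}
    (hxi : ‖(x i : K) - beerPoint K q π S lam i‖ ≤ ‖(π : K)‖ ^ lam)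
    (hv : ‖v - beerPoint K q π S lam i‖ ≤ ‖(π : K)‖ ^ lam)
    (hc : ‖c - beerPoint K q π S lam j‖ ≤ ‖(π : K)‖ ^ lam) (t : ℝ) :
    ‖(x i : K) - c‖ ^ t - ‖(x j : K) - c‖ ^ t ≤ ‖v - c‖ ^ t := by
  rcases eq_or_ne i j with rfl | hne
  · rw [sub_self]
    exact Real.rpow_nonneg (norm_nonneg _) t
  · rw [h.norm_sub_eq_norm_sub_of_ne hi hj hne hxi hv hc]
    exact sub_le_self _ (Real.rpow_nonneg (norm_nonneg _) t)

theorem IsDigitSystem.rpow_update_eq (h : IsDigitSystem q π S) {lam i j : ℕ}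
    (hi : i < q ^ lam) (hj : j < q ^ lam) {v : K} {c : RoI K}
    (hv : ‖v - beerPoint K q π S lam i‖ ≤ ‖(π : K)‖ ^ lam)
    (hc : ‖(c : K) - beerPoint K q π S lam j‖ ≤ ‖(π : K)‖ ^ lam)
    (hvc : ‖v - c‖ ≤ ‖(π : K)‖ ^ lam → v = c) (t : ℝ) :
    ‖(Function.update (beerPoint K q π S lam) j c i : K) - c‖ ^ t = ‖v - c‖ ^ t := by
  rcases eq_or_ne i j with rfl | hne
  · rw [Function.update_self, hvc (norm_sub_le_of_norm_sub_le hv hc)]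
  · rw [Function.update_of_ne hne]
    congr 1
    exact h.norm_sub_eq_norm_sub_of_ne hi hj hne (by simp) hv hc

theorem IsDigitSystem.VBeerLevel_rpow_le (h : IsDigitSystem q π S) (c : RoI K) {t : ℝ}
    (ht : 0 ≤ t) (lam : ℕ) :
    VBeerLevel K q π S (fun x => ‖(x : K) - c‖ ^ t) lam ≤
      ENNReal.ofReal (‖(S 0 : K) / (1 - π) - c‖ ^ t + ‖(S (q - 1) : K) / (1 - π) - c‖ ^ t) := by
  obtain ⟨j, hj, hc⟩ := h.isRepSystem.exists_norm_sub_beerPoint_le c lam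
  refine iSup_le fun x => ?_
  have hx i (hi : i < q ^ lam) := h.mem_disc_iff.mp (x.2 i hi)
  rw [← ENNReal.ofReal_sum_of_nonneg fun _ _ => abs_nonneg _, h.sum_abs_sub_rpow_eq hx hc hj ht]
  exact ENNReal.ofReal_le_ofReal <| add_le_add
    (h.rpow_sub_rpow_le (by omega) hj (hx 0 (by omega))
      (h.norm_div_one_sub_sub_beerPoint_zero_le lam) hc t)
    (h.rpow_sub_rpow_le (by omega) hj (hx _ (by omega))
      (h.norm_div_one_sub_sub_beerPoint_last_le lam) hc t)

theorem IsDigitSystem.le_VBeerLevel_rpow (h : IsDigitSystem q π S) (c : RoI K) {t : ℝ}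
    (ht : 0 < t) {lam : ℕ}
    (hα : ‖(S 0 : K) / (1 - π) - c‖ ≤ ‖(π : K)‖ ^ lam → (S 0 : K) / (1 - π) = c)
    (hβ : ‖(S (q - 1) : K) / (1 - π) - c‖ ≤ ‖(π : K)‖ ^ lam → (S (q - 1) : K) / (1 - π) = c) :
    ENNReal.ofReal (‖(S 0 : K) / (1 - π) - c‖ ^ t + ‖(S (q - 1) : K) / (1 - π) - c‖ ^ t) ≤
      VBeerLevel K q π S (fun x => ‖(x : K) - c‖ ^ t) lam := by
  obtain ⟨j, hj, hc⟩ := h.isRepSystem.exists_norm_sub_beerPoint_le c lam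
  set x := Function.update (beerPoint K q π S lam) j c
  have hx : ∀ i < q ^ lam, ‖(x i : K) - beerPoint K q π S lam i‖ ≤ ‖(π : K)‖ ^ lam := by
    intro i _
    rcases eq_or_ne i j with rfl | hne
    · simpa [x] using hc
    · simp [x, hne]
  refine le_iSup_of_le ⟨x, fun i hi => h.mem_disc_iff.mpr (hx i hi)⟩ ?_
  rw [← ENNReal.ofReal_sum_of_nonneg fun _ _ => abs_nonneg _,
    h.sum_abs_sub_rpow_eq hx hc hj ht.le,
    h.rpow_update_eq (by omega) hj (h.norm_div_one_sub_sub_beerPoint_zero_le lam) hc hα,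
    h.rpow_update_eq (by omega) hj (h.norm_div_one_sub_sub_beerPoint_last_le lam) hc hβ]
  simp [x, Real.zero_rpow ht.ne']

theorem IsDigitSystem.norm_div_one_sub_sub_le_one (h : IsDigitSystem q π S) (a : ℕ)
    (c : RoI K) : ‖(S a : K) / (1 - π) - c‖ ≤ 1 := by
  refine (norm_sub_le_max _ _).trans (max_le ?_ c.2)
  rw [norm_div, norm_one_sub_eq_one h.norm_pi_lt_one, div_one]
  exact (S a).2

theorem IsDigitSystem.norm_sub_eq_one_or_norm_sub_eq_one (h : IsDigitSystem q π S) (c : RoI K) :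
    ‖(S 0 : K) / (1 - π) - c‖ = 1 ∨ ‖(S (q - 1) : K) / (1 - π) - c‖ = 1 := by
  have hq := h.one_lt
  set α := (S 0 : K) / (1 - π)
  set β := (S (q - 1) : K) / (1 - π)
  have hαβ : ‖α - β‖ = 1 := by
    rw [div_sub_div_same, norm_div, norm_one_sub_eq_one h.norm_pi_lt_one, div_one,
      h.norm_sub_eq_one (by omega) (by omega) (by omega)]
  have hmax : 1 ≤ max ‖α - c‖ ‖β - c‖ :=
    calc 1 = ‖(α - c) - (β - c)‖ := by rw [sub_sub_sub_cancel_right, hαβ]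
      _ ≤ _ := norm_sub_le_max _ _
  rcases le_max_iff.mp hmax with h1 | h1
  · exact Or.inl ((h.norm_div_one_sub_sub_le_one 0 c).antisymm h1)
  · exact Or.inr ((h.norm_div_one_sub_sub_le_one (q - 1) c).antisymm h1)

end BeerPoints

theorem VBeer_dist_rpow
    (hq : 1 < q)
    (hπ : ‖(π : K)‖ = (q : ℝ)⁻¹)
    (hunif : ∀ x : RoI K, ‖(x : K)‖ < 1 → ‖(x : K)‖ ≤ ‖(π : K)‖)
    (S : ℕ → RoI K) (hS : IsRepSystem K q π S)
    (c : RoI K) (t : ℝ) (ht : 0 < t) :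
    VBeer K q π S (fun x => ‖(x : K) - (c : K)‖ ^ t) =
        ENNReal.ofReal (‖(S 0 : K) / (1 - (π : K)) - (c : K)‖ ^ t +
          ‖(S (q - 1) : K) / (1 - (π : K)) - (c : K)‖ ^ t) ∧
      1 ≤ VBeer K q π S (fun x => ‖(x : K) - (c : K)‖ ^ t) ∧
      VBeer K q π S (fun x => ‖(x : K) - (c : K)‖ ^ t) ≤ 2 ∧
      (VBeer K q π S (fun x => ‖(x : K) - (c : K)‖ ^ t) = 1 ↔
        (c : K) = (S 0 : K) / (1 - (π : K)) ∨ (c : K) = (S (q - 1) : K) / (1 - (π : K))) := by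
  have h : IsDigitSystem q π S := ⟨hq, hπ, hunif, hS⟩
  have hV : VBeer K q π S (fun x => ‖(x : K) - (c : K)‖ ^ t) =
      ENNReal.ofReal (‖(S 0 : K) / (1 - (π : K)) - (c : K)‖ ^ t +
        ‖(S (q - 1) : K) / (1 - (π : K)) - (c : K)‖ ^ t) := by
    refine le_antisymm (iSup_le fun lam => h.VBeerLevel_rpow_le c ht.le _) ?_
    obtain ⟨N, hN⟩ := eventually_atTop.mp
      ((eventually_eq_of_norm_sub_le_pow (norm_nonneg _) h.norm_pi_lt_one _ (c : K)).and
        (eventually_eq_of_norm_sub_le_pow (norm_nonneg _) h.norm_pi_lt_one _ (c : K)))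
    exact le_iSup_of_le N (h.le_VBeerLevel_rpow c ht (hN _ N.le_succ).1 (hN _ N.le_succ).2)
  obtain ⟨hlow, hup, hone⟩ := rpow_add_rpow_bounds (norm_nonneg _) (norm_nonneg _)
    (h.norm_div_one_sub_sub_le_one 0 c) (h.norm_div_one_sub_sub_le_one (q - 1) c)
    (h.norm_sub_eq_one_or_norm_sub_eq_one c) ht
  rw [hV, ENNReal.one_le_ofReal, ENNReal.ofReal_eq_one, hone]
  refine ⟨rfl, hlow, (ENNReal.ofReal_le_ofReal hup).trans_eq (ENNReal.ofReal_ofNat 2), ?_⟩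
  simp only [norm_eq_zero, sub_eq_zero]
  exact or_congr eq_comm eq_comm

end NAKoksma
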